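/- arXiv:1912.07957 — 3 statements merged into one kernel-verified Lean document; each statement's English description precedes it below -/
import Mathlib

section
/- If two equilateral L-shapes (of type ⌞) have corners in distinct grid boxes (r₁,c₁) and (r₂,c₂) with r₁,r₂,c₁,c₂ all ≡ 0 (mod 3), where the grid has square boxes of side length s and each L has both arm lengths in [s, 2s), then the two L-shapes are disjoint (do not intersect). -/
/-- An L-shape of type ⌞ given by its corner `(xc, yc)`, horizontal tip x-coordinate `xh`
and vertical tip y-coordinate `yv`. -/
structure LShape where
  xc : ℝ
  yc : ℝ
  xh : ℝ
  yv : ℝ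
  hx : xc ≤ xh
  hy : yc ≤ yv

/-- The point set of a type-⌞ L-shape. -/
def LShape.pts (l : LShape) : Set (ℝ × ℝ) :=
  {p | (p.2 = l.yc ∧ l.xc ≤ p.1 ∧ p.1 ≤ l.xh) ∨ (p.1 = l.xc ∧ l.yc ≤ p.2 ∧ p.2 ≤ l.yv)}

/-- The corner of `l` lies inside the half-open grid box `(r, c)` of side length `s`. -/
def InBox (s : ℝ) (r c : ℤ) (l : LShape) : Prop :=
  (c : ℝ) * s ≤ l.xc ∧ l.xc < ((c : ℝ) + 1) * s ∧ (r : ℝ) * s ≤ l.yc ∧ l.yc < ((r : ℝ) + 1) * s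


/-!
Both arms are shorter than `2s`, so an L whose corner lies in box `(r, c)` stays inside the
`3s × 3s` block of boxes `(r..r+2, c..c+2)`. When the box indices are multiples of `3` these
blocks tile the plane, so distinct boxes give disjoint blocks.
-/

open Set

def gridBlock (s : ℝ) (r c : ℤ) : Set (ℝ × ℝ) :=
  Ico (c * s) ((c + 3) * s) ×ˢ Ico (r * s) ((r + 3) * s)

lemma LShape.pts_subset_gridBlock {s : ℝ} {r c : ℤ} {l : LShape} (h : InBox s r c l)
    (ha : l.xh - l.xc < 2 * s) (hb : l.yv - l.yc < 2 * s) :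
    l.pts ⊆ gridBlock s r c := by
  obtain ⟨hc₁, hc₂, hr₁, hr₂⟩ := h
  have hx := l.hx
  have hy := l.hy
  rintro ⟨x, y⟩ (⟨rfl, hx₁, hx₂⟩ | ⟨rfl, hy₁, hy₂⟩) <;>
    simp only [gridBlock, mem_prod, mem_Ico] <;>
    refine ⟨⟨?_, ?_⟩, ?_, ?_⟩ <;> linarith

lemma disjoint_Ico_mul_of_emod_three {s : ℝ} (hs : 0 < s) {m n : ℤ}
    (hm : m % 3 = 0) (hn : n % 3 = 0) (hmn : m ≠ n) :
    Disjoint (Ico (m * s) ((m + 3) * s)) (Ico (n * s) ((n + 3) * s)) := by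
  rw [Ico_disjoint_Ico]
  rcases (show m + 3 ≤ n ∨ n + 3 ≤ m by omega) with h | h
  · have : ((m : ℝ) + 3) * s ≤ n * s := by gcongr; exact_mod_cast h
    exact (min_le_left _ _).trans (this.trans (le_max_right _ _))
  · have : ((n : ℝ) + 3) * s ≤ m * s := by gcongr; exact_mod_cast h
    exact (min_le_right _ _).trans (this.trans (le_max_left _ _))

lemma disjoint_gridBlock {s : ℝ} (hs : 0 < s) {r₁ c₁ r₂ c₂ : ℤ}
    (hr₁ : r₁ % 3 = 0) (hc₁ : c₁ % 3 = 0) (hr₂ : r₂ % 3 = 0) (hc₂ : c₂ % 3 = 0)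
    (hne : (r₁, c₁) ≠ (r₂, c₂)) :
    Disjoint (gridBlock s r₁ c₁) (gridBlock s r₂ c₂) := by
  rw [gridBlock, gridBlock, disjoint_prod]
  by_cases hc : c₁ = c₂
  · subst hc
    exact Or.inr (disjoint_Ico_mul_of_emod_three hs hr₁ hr₂ fun h => hne (by rw [h]))
  · exact Or.inl (disjoint_Ico_mul_of_emod_three hs hc₁ hc₂ hc)

/-- If two L-shapes of type ⌞ have both arm lengths in `[s, 2s)` and their corners lie in
distinct grid boxes `(r₁, c₁) ≠ (r₂, c₂)` with all of `r₁, c₁, r₂, c₂ ≡ 0 (mod 3)`, then the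
two L-shapes are disjoint. -/
theorem stmt0 (s : ℝ) (hs : 0 < s) (l₁ l₂ : LShape) (r₁ c₁ r₂ c₂ : ℤ)
    (h1 : InBox s r₁ c₁ l₁) (h2 : InBox s r₂ c₂ l₂)
    (hr₁ : r₁ % 3 = 0) (hc₁ : c₁ % 3 = 0) (hr₂ : r₂ % 3 = 0) (hc₂ : c₂ % 3 = 0)
    (hne : (r₁, c₁) ≠ (r₂, c₂))
    (ha₁ : s ≤ l₁.xh - l₁.xc ∧ l₁.xh - l₁.xc < 2 * s)
    (hb₁ : s ≤ l₁.yv - l₁.yc ∧ l₁.yv - l₁.yc < 2 * s)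
    (ha₂ : s ≤ l₂.xh - l₂.xc ∧ l₂.xh - l₂.xc < 2 * s)
    (hb₂ : s ≤ l₂.yv - l₂.yc ∧ l₂.yv - l₂.yc < 2 * s) :
    l₁.pts ∩ l₂.pts = ∅ := by
  rw [← disjoint_iff_inter_eq_empty]
  exact (disjoint_gridBlock hs hr₁ hc₁ hr₂ hc₂ hne).mono
    (LShape.pts_subset_gridBlock h1 ha₁.2 hb₁.2) (LShape.pts_subset_gridBlock h2 ha₂.2 hb₂.2)
end

section
/- Fix a residue pair (k_r, k_c) ∈ {0,1,2}². For a set S of type-⌞ L-shapes with all arm lengths in [s, 2s), whose corners lie in grid boxes (r', c') with r' ≡ k_r (mod 3) and c' ≡ k_c (mod 3), the intersection graph of S is the disjoint union, over boxes (r, c) with r ≡ k_r, c ≡ k_c (mod 3), of the intersection graphs of the L-shapes with corner in box (r, c); i.e., there are no edges between L-shapes whose corners lie in distinct such boxes. -/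
/-!
Every point of an L-shape whose corner lies in box `(r, c)` and whose arms are shorter than `2s`
lies in the `3 × 3` block of boxes with lower-left box `(r, c)`. Two distinct boxes whose indices
agree modulo `3` differ by at least `3` in some index, so these blocks are disjoint.
-/

open Set

lemma disjoint_Ico_mul_of_le_abs_sub {s : ℝ} (hs : 0 ≤ s) {m m' n : ℤ} (h : n ≤ |m' - m|) :
    Disjoint (Ico ((m : ℝ) * s) ((m + n) * s)) (Ico ((m' : ℝ) * s) ((m' + n) * s)) := by
  wlog hmm' : m ≤ m' generalizing m m'
  · exact (this (by rwa [abs_sub_comm]) (le_of_not_ge hmm')).symm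
  have hle : ((m : ℝ) + n) * s ≤ m' * s := by
    gcongr
    exact_mod_cast (show m + n ≤ m' by rw [abs_of_nonneg (sub_nonneg.2 hmm')] at h; omega)
  exact Ico_disjoint_Ico.2 (min_le_of_left_le (le_max_of_le_right hle))

lemma disjoint_Ico_mul_of_modEq {s : ℝ} (hs : 0 ≤ s) {m m' n : ℤ} (h : m ≡ m' [ZMOD n])
    (hne : m ≠ m') :
    Disjoint (Ico ((m : ℝ) * s) ((m + n) * s)) (Ico ((m' : ℝ) * s) ((m' + n) * s)) := by
  refine disjoint_Ico_mul_of_le_abs_sub hs (not_lt.1 fun hlt => hne ?_)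
  linarith [Int.eq_zero_of_abs_lt_dvd h.dvd hlt]

lemma LShape.pts_subset_of_inBox {s : ℝ} {r c : ℤ} {l : LShape} (h : InBox s r c l)
    (ha : l.xh - l.xc < 2 * s) (hb : l.yv - l.yc < 2 * s) :
    l.pts ⊆ Ico ((c : ℝ) * s) ((c + (3 : ℤ)) * s) ×ˢ Ico ((r : ℝ) * s) ((r + (3 : ℤ)) * s) := by
  obtain ⟨hc₁, hc₂, hr₁, hr₂⟩ := h
  rintro p (⟨hy, hx₁, hx₂⟩ | ⟨hx, hy₁, hy₂⟩) <;>
    refine ⟨⟨?_, ?_⟩, ⟨?_, ?_⟩⟩ <;> push_cast <;> linarith [l.hx, l.hy]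

theorem stmt8_general (s : ℝ) (hs : 0 < s) (kr kc : ℤ)
    (l₁ l₂ : LShape) (r₁ c₁ r₂ c₂ : ℤ)
    (h1 : InBox s r₁ c₁ l₁) (h2 : InBox s r₂ c₂ l₂)
    (hr₁ : r₁ % 3 = kr) (hc₁ : c₁ % 3 = kc) (hr₂ : r₂ % 3 = kr) (hc₂ : c₂ % 3 = kc)
    (hne : (r₁, c₁) ≠ (r₂, c₂))
    (ha₁ : s ≤ l₁.xh - l₁.xc ∧ l₁.xh - l₁.xc < 2 * s)
    (hb₁ : s ≤ l₁.yv - l₁.yc ∧ l₁.yv - l₁.yc < 2 * s)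
    (ha₂ : s ≤ l₂.xh - l₂.xc ∧ l₂.xh - l₂.xc < 2 * s)
    (hb₂ : s ≤ l₂.yv - l₂.yc ∧ l₂.yv - l₂.yc < 2 * s) :
    l₁.pts ∩ l₂.pts = ∅ := by
  rw [← disjoint_iff_inter_eq_empty]
  refine (disjoint_prod.2 ?_).mono (l₁.pts_subset_of_inBox h1 ha₁.2 hb₁.2)
    (l₂.pts_subset_of_inBox h2 ha₂.2 hb₂.2)
  by_cases hc : c₁ = c₂
  · have hr : r₁ ≠ r₂ := fun hr => hne (by rw [hr, hc])
    exact .inr (disjoint_Ico_mul_of_modEq hs.le (hr₁.trans hr₂.symm) hr)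
  · exact .inl (disjoint_Ico_mul_of_modEq hs.le (hc₁.trans hc₂.symm) hc)

/-- Fix residues `kr, kc ∈ {0, 1, 2}`.  If two type-⌞ L-shapes have all arm lengths in
`[s, 2s)` and corners in distinct grid boxes `(r₁, c₁) ≠ (r₂, c₂)` with
`r₁ ≡ r₂ ≡ kr (mod 3)` and `c₁ ≡ c₂ ≡ kc (mod 3)`, then they are disjoint: the intersection
graph of such a family is the disjoint union of the intersection graphs over the individual
boxes, there being no edges between L-shapes with corners in distinct boxes. -/
theorem stmt8 (s : ℝ) (hs : 0 < s) (kr kc : ℤ)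
    (hkr : kr = 0 ∨ kr = 1 ∨ kr = 2) (hkc : kc = 0 ∨ kc = 1 ∨ kc = 2)
    (l₁ l₂ : LShape) (r₁ c₁ r₂ c₂ : ℤ)
    (h1 : InBox s r₁ c₁ l₁) (h2 : InBox s r₂ c₂ l₂)
    (hr₁ : r₁ % 3 = kr) (hc₁ : c₁ % 3 = kc) (hr₂ : r₂ % 3 = kr) (hc₂ : c₂ % 3 = kc)
    (hne : (r₁, c₁) ≠ (r₂, c₂))
    (ha₁ : s ≤ l₁.xh - l₁.xc ∧ l₁.xh - l₁.xc < 2 * s)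
    (hb₁ : s ≤ l₁.yv - l₁.yc ∧ l₁.yv - l₁.yc < 2 * s)
    (ha₂ : s ≤ l₂.xh - l₂.xc ∧ l₂.xh - l₂.xc < 2 * s)
    (hb₂ : s ≤ l₂.yv - l₂.yc ∧ l₂.yv - l₂.yc < 2 * s) :
    l₁.pts ∩ l₂.pts = ∅ :=
  stmt8_general s hs kr kc l₁ l₂ r₁ c₁ r₂ c₂ h1 h2 hr₁ hc₁ hr₂ hc₂ hne ha₁ hb₁ ha₂ hb₂
end

section
/- Let S be a finite set of type-⌞ L-shapes, all with arm lengths in [s, 2s) for some s > 0, whose corners all lie in a single half-open square box [c·s,(c+1)·s) × [r·s,(r+1)·s), and assume distinct L-shapes have distinct corner x-coordinates and distinct corner y-coordinates. Then the intersection graph of S is a permutation graph. -/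
/-- The intersection graph of a finite set of L-shapes. -/
def interGraph (S : Finset LShape) : SimpleGraph {l : LShape // l ∈ S} where
  Adj a b := a ≠ b ∧ ((a : LShape).pts ∩ (b : LShape).pts).Nonempty
  symm := by
    constructor
    rintro a b ⟨h1, h2⟩
    exact ⟨h1.symm, by rwa [Set.inter_comm]⟩
  loopless := by
    constructor
    rintro a ⟨h1, -⟩
    exact h1 rfl

/-- The inversion graph of a permutation `π` of `{1, …, n}`: edges are the inversions,
i.e. pairs `(i, j)` with `(i - j) * (π⁻¹ i - π⁻¹ j) < 0`. -/
def invGraph {n : ℕ} (π : Equiv.Perm (Fin n)) : SimpleGraph (Fin n) where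
  Adj i j := ((i : ℤ) - (j : ℤ)) * ((π.symm i : ℤ) - (π.symm j : ℤ)) < 0
  symm := by
    constructor
    intro i j h
    have e : ((j : ℤ) - (i : ℤ)) * ((π.symm j : ℤ) - (π.symm i : ℤ))
        = ((i : ℤ) - (j : ℤ)) * ((π.symm i : ℤ) - (π.symm j : ℤ)) := by ring
    linarith
  loopless := by
    constructor
    intro i h
    simp at h

/-- A graph is a permutation graph if it is isomorphic to the inversion graph of
some permutation. -/
def IsPermutationGraph {V : Type*} (G : SimpleGraph V) : Prop :=
  ∃ (n : ℕ) (π : Equiv.Perm (Fin n)), Nonempty (G ≃g invGraph π)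


/-! Inside one box of side `s`, corners differ by less than `s` in each coordinate, while every
arm has length at least `s`. Hence two L-shapes meet exactly when one corner lies to the left of
and above the other (the horizontal arm of the left one then crosses the vertical arm of the
right one), so the intersection graph is the inversion graph of the permutation that compares
the order of the corners by x-coordinate with their order by y-coordinate. -/

open Function

lemma exists_equiv_fin_lt_iff {V α : Type*} [Fintype V] [LinearOrder α] {f : V → α}
    (hf : Injective f) : ∃ e : V ≃ Fin (Fintype.card V), ∀ a b, e a < e b ↔ f a < f b := by
  let _ := LinearOrder.lift' f hf
  exact ⟨(Fintype.orderIsoFinOfCardEq V rfl).symm.toEquiv,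
    fun a b => (Fintype.orderIsoFinOfCardEq V rfl).symm.lt_iff_lt⟩

theorem isPermutationGraph_of_adj_iff {V α β : Type*} [Fintype V] [LinearOrder α]
    [LinearOrder β] (G : SimpleGraph V) {f : V → α} {g : V → β}
    (hf : Injective f) (hg : Injective g)
    (hG : ∀ a b, G.Adj a b ↔ (f a < f b ∧ g b < g a) ∨ (f b < f a ∧ g a < g b)) :
    IsPermutationGraph G := by
  obtain ⟨eX, heX⟩ := exists_equiv_fin_lt_iff hf
  obtain ⟨eY, heY⟩ := exists_equiv_fin_lt_iff hg
  refine ⟨_, eY.symm.trans eX, ⟨⟨eX, fun {a b} => ?_⟩⟩⟩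
  change ((eX a : ℤ) - eX b) * ((eY (eX.symm (eX a)) : ℤ) - eY (eX.symm (eX b))) < 0 ↔
    G.Adj a b
  simp only [Equiv.symm_apply_apply, mul_neg_iff, sub_pos, sub_neg, Int.ofNat_lt,
    Fin.val_fin_lt, heX, heY, hG]
  tauto

namespace LShape

lemma mk_mem_pts_inter {a b : LShape} (hx : a.xc ≤ b.xc) (hx' : b.xc ≤ a.xh)
    (hy : b.yc ≤ a.yc) (hy' : a.yc ≤ b.yv) : (b.xc, a.yc) ∈ a.pts ∩ b.pts :=
  ⟨Or.inl ⟨rfl, hx, hx'⟩, Or.inr ⟨rfl, hy, hy'⟩⟩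

lemma corners_anti_ordered_of_pts_inter_nonempty {a b : LShape} (hx : a.xc ≠ b.xc)
    (hy : a.yc ≠ b.yc) (h : (a.pts ∩ b.pts).Nonempty) :
    (a.xc < b.xc ∧ b.yc < a.yc) ∨ (b.xc < a.xc ∧ a.yc < b.yc) := by
  obtain ⟨p, hpa, hpb⟩ := h
  rcases hpa with ⟨ha, ha₁, -⟩ | ⟨ha, ha₁, -⟩ <;>
    rcases hpb with ⟨hb, hb₁, -⟩ | ⟨hb, hb₁, -⟩
  · exact absurd (ha.symm.trans hb) hy
  · exact Or.inl ⟨lt_of_le_of_ne (hb ▸ ha₁) hx, lt_of_le_of_ne (ha ▸ hb₁) hy.symm⟩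
  · exact Or.inr ⟨lt_of_le_of_ne (ha ▸ hb₁) hx.symm, lt_of_le_of_ne (hb ▸ ha₁) hy⟩
  · exact absurd (ha.symm.trans hb) hx

end LShape

section InBox

variable {s : ℝ} {r c : ℤ} {a b : LShape}

lemma InBox.xc_lt_add (ha : InBox s r c a) (hb : InBox s r c b) : b.xc < a.xc + s := by
  obtain ⟨ha₁, -⟩ := ha
  obtain ⟨-, hb₂, -⟩ := hb
  linarith

lemma InBox.yc_lt_add (ha : InBox s r c a) (hb : InBox s r c b) : b.yc < a.yc + s := by
  obtain ⟨-, -, ha₃, -⟩ := ha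
  obtain ⟨-, -, -, hb₄⟩ := hb
  linarith

lemma InBox.pts_inter_nonempty_of_lt_of_lt (ha : InBox s r c a) (hb : InBox s r c b)
    (harm_a : s ≤ a.xh - a.xc) (harm_b : s ≤ b.yv - b.yc) (hx : a.xc < b.xc)
    (hy : b.yc < a.yc) : (a.pts ∩ b.pts).Nonempty :=
  ⟨_, LShape.mk_mem_pts_inter hx.le (by linarith [ha.xc_lt_add hb]) hy.le
    (by linarith [hb.yc_lt_add ha])⟩

end InBox

theorem stmt9_general (s : ℝ) (r c : ℤ) (S : Finset LShape)
    (harm : ∀ l ∈ S, (s ≤ l.xh - l.xc ∧ l.xh - l.xc < 2 * s) ∧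
      (s ≤ l.yv - l.yc ∧ l.yv - l.yc < 2 * s))
    (hbox : ∀ l ∈ S, InBox s r c l)
    (hxd : ∀ l₁ ∈ S, ∀ l₂ ∈ S, l₁ ≠ l₂ → l₁.xc ≠ l₂.xc)
    (hyd : ∀ l₁ ∈ S, ∀ l₂ ∈ S, l₁ ≠ l₂ → l₁.yc ≠ l₂.yc) :
    IsPermutationGraph (interGraph S) := by
  have hx : Injective fun a : S => a.1.xc := fun a b h =>
    Subtype.ext <| by_contra fun hab => hxd _ a.2 _ b.2 hab h
  have hy : Injective fun a : S => a.1.yc := fun a b h =>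
    Subtype.ext <| by_contra fun hab => hyd _ a.2 _ b.2 hab h
  have adj_of_lt {a b : S} (hxab : a.1.xc < b.1.xc) (hyab : b.1.yc < a.1.yc) :
      (interGraph S).Adj a b :=
    ⟨hx.ne_iff.mp hxab.ne, (hbox _ a.2).pts_inter_nonempty_of_lt_of_lt (hbox _ b.2)
      (harm _ a.2).1.1 (harm _ b.2).2.1 hxab hyab⟩
  refine isPermutationGraph_of_adj_iff _ hx hy fun a b => ⟨?_, ?_⟩
  · rintro ⟨hab, hint⟩
    exact LShape.corners_anti_ordered_of_pts_inter_nonempty (hx.ne hab) (hy.ne hab) hint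
  · rintro (⟨hxab, hyab⟩ | ⟨hxab, hyab⟩)
    exacts [adj_of_lt hxab hyab, (adj_of_lt hxab hyab).symm]

/-- Let `S` be a finite set of type-⌞ L-shapes, all with arm lengths in `[s, 2s)`, whose
corners all lie in the single half-open grid box `(r, c)` of side `s`, with pairwise
distinct corner x-coordinates and pairwise distinct corner y-coordinates.  Then the
intersection graph of `S` is a permutation graph. -/
theorem stmt9 (s : ℝ) (hs : 0 < s) (r c : ℤ) (S : Finset LShape)
    (harm : ∀ l ∈ S, (s ≤ l.xh - l.xc ∧ l.xh - l.xc < 2 * s) ∧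
      (s ≤ l.yv - l.yc ∧ l.yv - l.yc < 2 * s))
    (hbox : ∀ l ∈ S, InBox s r c l)
    (hxd : ∀ l₁ ∈ S, ∀ l₂ ∈ S, l₁ ≠ l₂ → l₁.xc ≠ l₂.xc)
    (hyd : ∀ l₁ ∈ S, ∀ l₂ ∈ S, l₁ ≠ l₂ → l₁.yc ≠ l₂.yc) :
    IsPermutationGraph (interGraph S) :=
  stmt9_general s r c S harm hbox hxd hyd
end
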